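/- Let C be a nonempty weak* compact convex subset of a dual Banach space and let 𝒮 be an arbitrary (possibly infinite) family of commuting weak*-continuous nonexpansive self-maps of C. Then Fix 𝒮 = ⋂_{T ∈ 𝒮} Fix T is nonempty and is a nonexpansive retract of C. -/

import Mathlib

/-!
A weak*-compact convex set `C` is norm bounded: Baire category in `C` gives a relatively
weak*-open piece of `C` inside a norm ball, and convexity spreads the bound to all of `C`.

Given a nonexpansive retraction `R` of `C` onto a weak*-closed `F` that is invariant under
one more map `T`, the anchored equation `z = R ((1 - ε) • T z + ε • x)` has, by Banach's fixed
point theorem, a solution `z_ε x ∈ F`; then `z_ε` is nonexpansive, fixes `F ∩ Fix T`, and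
`‖T (z_ε x) - z_ε x‖ ≤ ε · diam C`. Since the dual norm is weak*-lower semicontinuous and
`T` is weak*-continuous, a pointwise weak*-limit of the `z_ε` along an ultrafilter is a
nonexpansive retraction onto `F ∩ Fix T`. Induction gives retractions `R_t` for all finite
`t ⊆ 𝒮`, and their limit along an ultrafilter refining the finite subsets directed by
inclusion retracts onto `Fix 𝒮`, each `Fix T` being weak*-closed.
-/

open Filter Topology Set

section FixedPoints

variable {X : Type*} [TopologicalSpace X] [T2Space X] {C : Set X}

theorem isClosed_setOf_mem_and_apply_eq (hC : IsClosed C) {T : X → X} (hT : ContinuousOn T C) :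
    IsClosed {x | x ∈ C ∧ T x = x} :=
  (hT.prodMk continuousOn_id).preimage_isClosed_of_isClosed hC isClosed_diagonal

theorem isClosed_setOf_mem_and_forall_apply_eq (hC : IsClosed C) {ι : Type*} {s : Set ι}
    {T : ι → X → X} (hT : ∀ i ∈ s, ContinuousOn (T i) C) :
    IsClosed {x | x ∈ C ∧ ∀ i ∈ s, T i x = x} := by
  have hfix : {x | x ∈ C ∧ ∀ i ∈ s, T i x = x} =
      C ∩ ⋂ i ∈ s, {x | x ∈ C ∧ T i x = x} := by
    ext x
    simp only [mem_ofPred_eq, mem_inter_iff, mem_iInter]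
    exact ⟨fun h => ⟨h.1, fun i hi => ⟨h.1, h.2 i hi⟩⟩,
      fun h => ⟨h.1, fun i hi => (h.2 i hi).2⟩⟩
  rw [hfix]
  exact hC.inter (isClosed_biInter fun i hi => isClosed_setOf_mem_and_apply_eq hC (hT i hi))

end FixedPoints

theorem IsCompact.exists_ultrafilter_tendsto_pointwise {X ι : Type*} [TopologicalSpace X]
    {C : Set X} (hC : IsCompact C) (l : Filter ι) [l.NeBot] {f : ι → X → X}
    (hf : ∀ i, MapsTo (f i) C C) :
    ∃ U : Ultrafilter ι, ↑U ≤ l ∧ ∃ g : X → X, MapsTo g C C ∧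
      ∀ x ∈ C, Tendsto (fun i => f i x) U (𝓝 (g x)) := by
  refine ⟨.of l, Ultrafilter.of_le l, ?_⟩
  have hlim : ∀ x ∈ C, ∃ y ∈ C, Tendsto (fun i => f i x) (Ultrafilter.of l) (𝓝 y) :=
    fun x hx => hC.ultrafilter_le_nhds ((Ultrafilter.of l).map fun i => f i x) <| by
      rw [Ultrafilter.coe_map, le_principal_iff, mem_map]; exact univ_mem' fun i => hf i hx
  choose! g hgC hg using hlim
  exact ⟨g, hgC, hg⟩

namespace WeakDual

variable {E : Type*} [NormedAddCommGroup E] [NormedSpace ℝ E]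

def NonexpansiveOn (f : WeakDual ℝ E → WeakDual ℝ E) (C : Set (WeakDual ℝ E)) : Prop :=
  ∀ y ∈ C, ∀ z ∈ C, ‖toStrongDual (f y - f z)‖ ≤ ‖toStrongDual (y - z)‖

def IsNonexpansiveRetraction (R : WeakDual ℝ E → WeakDual ℝ E) (C F : Set (WeakDual ℝ E)) :
    Prop :=
  MapsTo R C F ∧ NonexpansiveOn R C ∧ ∀ x ∈ F, R x = x

theorem isClosed_setOf_norm_le (r : ℝ) :
    IsClosed {x : WeakDual ℝ E | ‖toStrongDual x‖ ≤ r} := by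
  simpa [Metric.closedBall, dist_zero_right] using isClosed_closedBall (0 : StrongDual ℝ E) r

theorem norm_le_of_tendsto {ι : Type*} {l : Filter ι} [l.NeBot] {g : ι → WeakDual ℝ E}
    {y : WeakDual ℝ E} {r : ℝ} (hg : Tendsto g l (𝓝 y))
    (hr : ∀ᶠ i in l, ‖toStrongDual (g i)‖ ≤ r) : ‖toStrongDual y‖ ≤ r :=
  (isClosed_setOf_norm_le r).mem_of_tendsto hg hr

theorem eq_of_tendsto_norm_sub {ι : Type*} {l : Filter ι} [l.NeBot] {f g : ι → WeakDual ℝ E}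
    {a b : WeakDual ℝ E} (hf : Tendsto f l (𝓝 a)) (hg : Tendsto g l (𝓝 b))
    (hfg : Tendsto (fun i => ‖toStrongDual (f i - g i)‖) l (𝓝 0)) : a = b := by
  have hle : ∀ ε > 0, ‖toStrongDual (a - b)‖ ≤ ε := fun ε hε =>
    norm_le_of_tendsto (hf.sub hg) (hfg (Iic_mem_nhds hε))
  have hzero : toStrongDual (a - b) = 0 :=
    norm_le_zero_iff.1 (le_of_forall_pos_le_add fun ε hε => by simpa using hle ε hε)
  rwa [LinearEquiv.map_eq_zero_iff, sub_eq_zero] at hzero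

theorem NonexpansiveOn.of_tendsto {ι : Type*} {l : Filter ι} [l.NeBot]
    {f : ι → WeakDual ℝ E → WeakDual ℝ E} {g : WeakDual ℝ E → WeakDual ℝ E}
    {C : Set (WeakDual ℝ E)} (hf : ∀ i, NonexpansiveOn (f i) C)
    (hg : ∀ x ∈ C, Tendsto (fun i => f i x) l (𝓝 (g x))) : NonexpansiveOn g C :=
  fun y hy z hz =>
    norm_le_of_tendsto ((hg y hy).sub (hg z hz)) (.of_forall fun i => hf i y hy z hz)

theorem isNonexpansiveRetraction_of_tendsto {ι : Type*} {l : Filter ι} [l.NeBot]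
    {f : ι → WeakDual ℝ E → WeakDual ℝ E} {g : WeakDual ℝ E → WeakDual ℝ E}
    {C F : Set (WeakDual ℝ E)} (hf : ∀ i, NonexpansiveOn (f i) C)
    (hfix : ∀ x ∈ F, ∀ᶠ i in l, f i x = x) (hFC : F ⊆ C) (hgF : MapsTo g C F)
    (hg : ∀ x ∈ C, Tendsto (fun i => f i x) l (𝓝 (g x))) : IsNonexpansiveRetraction g C F :=
  ⟨hgF, .of_tendsto hf hg, fun x hx =>
    tendsto_nhds_unique (hg x (hFC hx))
      (tendsto_const_nhds.congr' ((hfix x hx).mono fun _ h => h.symm))⟩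

theorem exists_mem_setOf_norm_le_mem_nhdsWithin {C : Set (WeakDual ℝ E)} (hcomp : IsCompact C)
    (hne : C.Nonempty) : ∃ p ∈ C, ∃ n : ℕ, {x | ‖toStrongDual x‖ ≤ n} ∈ 𝓝[C] p := by
  have : CompactSpace C := isCompact_iff_compactSpace.1 hcomp
  have : Nonempty C := hne.to_subtype
  obtain ⟨n, q, hq⟩ := nonempty_interior_of_iUnion_of_closed
    (f := fun n : ℕ => {x : C | ‖toStrongDual (x : WeakDual ℝ E)‖ ≤ n})
    (fun n => (isClosed_setOf_norm_le n).preimage continuous_subtype_val)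
    (eq_univ_of_forall fun x => mem_iUnion.2 (exists_nat_ge ‖toStrongDual (x : WeakDual ℝ E)‖))
  refine ⟨q, q.2, n, ?_⟩
  have hq' := mem_interior_iff_mem_nhds.1 hq
  rw [mem_nhds_subtype_iff_nhdsWithin] at hq'
  exact mem_of_superset hq' (image_subset_iff.2 fun x hx => hx)

theorem exists_norm_le_of_isCompact_of_convex {C : Set (WeakDual ℝ E)} (hcomp : IsCompact C)
    (hconv : Convex ℝ C) : ∃ M, ∀ x ∈ C, ‖toStrongDual x‖ ≤ M := by
  rcases C.eq_empty_or_nonempty with rfl | hne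
  · exact ⟨0, by simp⟩
  obtain ⟨p, hp, n, hn⟩ := exists_mem_setOf_norm_le_mem_nhdsWithin hcomp hne
  obtain ⟨W, hW, hpW, hWC⟩ := mem_nhdsWithin.1 hn
  -- `C - p` is von Neumann bounded, hence absorbed by the neighbourhood `W - p` of `0`.
  have hbdd : Bornology.IsVonNBounded ℝ ((· - p) '' C) :=
    (hcomp.image (continuous_sub_right p)).isVonNBounded ℝ
  have hW0 : (p + ·) ⁻¹' W ∈ 𝓝 (0 : WeakDual ℝ E) :=
    (continuous_const_add p).continuousAt.preimage_mem_nhds (by simpa using hW.mem_nhds hpW)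
  obtain ⟨c, hcW, hc0, hc1⟩ :=
    (((tendsto_smallSets_iff.1 hbdd.tendsto_smallSets_nhds _ hW0).filter_mono
      nhdsWithin_le_nhds).and (Ioc_mem_nhdsGT one_pos)).exists
  refine ⟨‖toStrongDual p‖ + (n + ‖toStrongDual p‖) / c, fun x hx => ?_⟩
  have hy : ‖toStrongDual (p + c • (x - p))‖ ≤ n :=
    hWC ⟨hcW (smul_mem_smul_set (mem_image_of_mem _ hx)),
      hconv.add_smul_sub_mem hp hx ⟨hc0.le, hc1⟩⟩
  rw [map_add, map_smul] at hy
  have hcx : c * ‖toStrongDual (x - p)‖ ≤ n + ‖toStrongDual p‖ := by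
    calc c * ‖toStrongDual (x - p)‖ = ‖c • toStrongDual (x - p)‖ := by
          rw [norm_smul, Real.norm_of_nonneg hc0.le]
      _ ≤ ‖toStrongDual p + c • toStrongDual (x - p)‖ + ‖toStrongDual p‖ :=
          norm_le_add_norm_add' _ _
      _ ≤ n + ‖toStrongDual p‖ := by gcongr
  calc ‖toStrongDual x‖ ≤ ‖toStrongDual p‖ + ‖toStrongDual (x - p)‖ := by
        simpa [map_sub] using norm_le_norm_add_norm_sub' (toStrongDual x) (toStrongDual p)
    _ ≤ ‖toStrongDual p‖ + (n + ‖toStrongDual p‖) / c := by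
        gcongr
        rwa [le_div_iff₀ hc0, mul_comm]

section Anchored

variable {C F : Set (WeakDual ℝ E)} {R T : WeakDual ℝ E → WeakDual ℝ E} {ε : ℝ}

theorem norm_anchored_sub_anchored_le (hconv : Convex ℝ C) (hRne : NonexpansiveOn R C)
    (hTC : MapsTo T C C) (hTne : NonexpansiveOn T C) (hε0 : 0 ≤ ε) (hε1 : ε ≤ 1)
    {x x' y y' : WeakDual ℝ E} (hx : x ∈ C) (hx' : x' ∈ C) (hy : y ∈ C) (hy' : y' ∈ C) :
    ‖toStrongDual (R ((1 - ε) • T y + ε • x) - R ((1 - ε) • T y' + ε • x'))‖ ≤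
      (1 - ε) * ‖toStrongDual (y - y')‖ + ε * ‖toStrongDual (x - x')‖ := by
  have hmem : ∀ {y x}, y ∈ C → x ∈ C → (1 - ε) • T y + ε • x ∈ C := fun hy hx =>
    hconv (hTC hy) hx (by linarith) hε0 (by ring)
  have hsub : (1 - ε) • T y + ε • x - ((1 - ε) • T y' + ε • x') =
      (1 - ε) • (T y - T y') + ε • (x - x') := by module
  calc _ ≤ ‖toStrongDual ((1 - ε) • (T y - T y') + ε • (x - x'))‖ := by
        rw [← hsub]; exact hRne _ (hmem hy hx) _ (hmem hy' hx')
    _ ≤ (1 - ε) * ‖toStrongDual (T y - T y')‖ + ε * ‖toStrongDual (x - x')‖ := by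
        rw [map_add, map_smul, map_smul]
        refine (norm_add_le _ _).trans_eq ?_
        rw [norm_smul, norm_smul, Real.norm_of_nonneg (by linarith), Real.norm_of_nonneg hε0]
    _ ≤ _ := add_le_add_left (mul_le_mul_of_nonneg_left (hTne y hy y' hy') (by linarith)) _

theorem norm_sub_le_of_anchored_fixedPoint (hconv : Convex ℝ C) (hRne : NonexpansiveOn R C)
    (hTC : MapsTo T C C) (hTne : NonexpansiveOn T C) (hε0 : 0 < ε) (hε1 : ε ≤ 1)
    {x x' z z' : WeakDual ℝ E} (hx : x ∈ C) (hx' : x' ∈ C) (hz : z ∈ C) (hz' : z' ∈ C)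
    (hzx : R ((1 - ε) • T z + ε • x) = z) (hzx' : R ((1 - ε) • T z' + ε • x') = z') :
    ‖toStrongDual (z - z')‖ ≤ ‖toStrongDual (x - x')‖ := by
  have h := norm_anchored_sub_anchored_le hconv hRne hTC hTne hε0.le hε1 hx hx' hz hz'
  rw [hzx, hzx'] at h
  nlinarith

theorem norm_apply_sub_le_of_anchored_fixedPoint (hRne : NonexpansiveOn R C)
    (hRF : ∀ y ∈ F, R y = y) (hFC : F ⊆ C) (hTF : MapsTo T F F) (hε0 : 0 ≤ ε)
    {x z : WeakDual ℝ E} (hw : (1 - ε) • T z + ε • x ∈ C) (hz : z ∈ F)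
    (hzx : R ((1 - ε) • T z + ε • x) = z) :
    ‖toStrongDual (T z - z)‖ ≤ ε * ‖toStrongDual (T z - x)‖ := by
  have hsub : T z - ((1 - ε) • T z + ε • x) = ε • (T z - x) := by module
  calc ‖toStrongDual (T z - z)‖ = ‖toStrongDual (R (T z) - R ((1 - ε) • T z + ε • x))‖ := by
        rw [hzx, hRF _ (hTF hz)]
    _ ≤ ‖toStrongDual (ε • (T z - x))‖ := by
        rw [← hsub]; exact hRne _ (hFC (hTF hz)) _ hw
    _ = ε * ‖toStrongDual (T z - x)‖ := by
        rw [map_smul, norm_smul, Real.norm_of_nonneg hε0]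

theorem exists_anchored_fixedPoint (hconv : Convex ℝ C) (hF : IsClosed F) (hFC : F ⊆ C)
    (hRF : MapsTo R C F) (hRne : NonexpansiveOn R C) (hTC : MapsTo T C C)
    (hTne : NonexpansiveOn T C) (hε0 : 0 < ε) (hε1 : ε ≤ 1) {x : WeakDual ℝ E} (hx : x ∈ C) :
    ∃ z ∈ F, R ((1 - ε) • T z + ε • x) = z := by
  set D : Set (StrongDual ℝ E) := StrongDual.toWeakDual ⁻¹' F
  set Φ : StrongDual ℝ E → StrongDual ℝ E :=
    fun y => toStrongDual (R ((1 - ε) • T (StrongDual.toWeakDual y) + ε • x))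
  have hD : IsComplete D := (hF.preimage NormedSpace.Dual.toWeakDual_continuous).isComplete
  have hΦD : MapsTo Φ D D := fun y hy =>
    hRF (hconv (hTC (hFC hy)) hx (by linarith) hε0.le (by ring))
  have hΦ : ContractingWith (1 - ε).toNNReal (hΦD.restrict Φ D D) := by
    refine ⟨Real.toNNReal_lt_one.2 (by linarith), LipschitzWith.of_dist_le_mul fun y y' => ?_⟩
    have h := norm_anchored_sub_anchored_le hconv hRne hTC hTne hε0.le hε1 hx hx (hFC y.2)
      (hFC y'.2)
    rw [sub_self, map_zero, norm_zero, mul_zero, add_zero] at h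
    rw [Subtype.dist_eq, Subtype.dist_eq, dist_eq_norm, dist_eq_norm,
      Real.coe_toNNReal _ (by linarith)]
    exact h
  obtain ⟨z, hzD, hz, -⟩ := hΦ.exists_fixedPoint' hD hΦD (hRF hx) (edist_ne_top _ _)
  exact ⟨StrongDual.toWeakDual z, hzD, hz⟩

theorem exists_nonexpansiveOn_approx_fixedPoint (hconv : Convex ℝ C) (hF : IsClosed F)
    (hFC : F ⊆ C) (hR : IsNonexpansiveRetraction R C F) (hTC : MapsTo T C C)
    (hTF : MapsTo T F F) (hTne : NonexpansiveOn T C) {M : ℝ}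
    (hM : ∀ x ∈ C, ‖toStrongDual x‖ ≤ M) (hε0 : 0 < ε) (hε1 : ε ≤ 1) :
    ∃ z, MapsTo z C F ∧ NonexpansiveOn z C ∧ (∀ x ∈ {x | x ∈ F ∧ T x = x}, z x = x) ∧
      ∀ x ∈ C, ‖toStrongDual (T (z x) - z x)‖ ≤ ε * (2 * M) := by
  obtain ⟨hRF, hRne, hRfix⟩ := hR
  choose! z hzF hz using fun x (hx : x ∈ C) =>
    exists_anchored_fixedPoint hconv hF hFC hRF hRne hTC hTne hε0 hε1 hx
  have hzC : MapsTo z C C := fun x hx => hFC (hzF x hx)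
  refine ⟨z, hzF, fun x hx x' hx' => ?_, fun x ⟨hxF, hTx⟩ => ?_, fun x hx => ?_⟩
  · exact norm_sub_le_of_anchored_fixedPoint hconv hRne hTC hTne hε0 hε1 hx hx' (hzC hx)
      (hzC hx') (hz x hx) (hz x' hx')
  · have hxx : R ((1 - ε) • T x + ε • x) = x := by
      rw [hTx, ← add_smul, sub_add_cancel, one_smul, hRfix x hxF]
    have h := norm_sub_le_of_anchored_fixedPoint hconv hRne hTC hTne hε0 hε1
      (hFC hxF) (hFC hxF) (hzC (hFC hxF)) (hFC hxF) (hz x (hFC hxF)) hxx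
    rwa [sub_self, map_zero, norm_zero, norm_le_zero_iff, LinearEquiv.map_eq_zero_iff,
      sub_eq_zero] at h
  · calc _ ≤ ε * ‖toStrongDual (T (z x) - x)‖ :=
          norm_apply_sub_le_of_anchored_fixedPoint hRne hRfix hFC hTF hε0.le
            (hconv (hTC (hzC hx)) hx (by linarith) hε0.le (by ring)) (hzF x hx) (hz x hx)
      _ ≤ ε * (2 * M) := by
          refine mul_le_mul_of_nonneg_left ?_ hε0.le
          rw [map_sub]
          linarith [norm_sub_le (toStrongDual (T (z x))) (toStrongDual x), hM _ (hTC (hzC hx)),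
            hM x hx]

end Anchored

theorem exists_isNonexpansiveRetraction_inter_fixedPoints {C F : Set (WeakDual ℝ E)}
    {R T : WeakDual ℝ E → WeakDual ℝ E} (hcomp : IsCompact C) (hconv : Convex ℝ C)
    (hF : IsClosed F) (hFC : F ⊆ C) (hR : IsNonexpansiveRetraction R C F) (hTC : MapsTo T C C)
    (hTF : MapsTo T F F) (hTc : ContinuousOn T C) (hTne : NonexpansiveOn T C) :
    ∃ R', IsNonexpansiveRetraction R' C {x | x ∈ F ∧ T x = x} := by
  obtain ⟨M, hM⟩ := exists_norm_le_of_isCompact_of_convex hcomp hconv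
  obtain ⟨ε, hε0, hε1, hεlim⟩ : ∃ ε : ℕ → ℝ, (∀ n, 0 < ε n) ∧ (∀ n, ε n ≤ 1) ∧
      Tendsto ε atTop (𝓝 0) :=
    ⟨fun n => 1 / (n + 1), fun n => Nat.one_div_pos_of_nat,
      fun n => div_le_one_of_le₀ (by simp) (by positivity),
      tendsto_one_div_add_atTop_nhds_zero_nat⟩
  choose z hzF hzne hzfix hzT using fun n =>
    exists_nonexpansiveOn_approx_fixedPoint hconv hF hFC hR hTC hTF hTne hM (hε0 n) (hε1 n)
  have hzC : ∀ n, MapsTo (z n) C C := fun n => (hzF n).mono_right hFC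
  obtain ⟨U, hU, R', hR'C, hlim⟩ := hcomp.exists_ultrafilter_tendsto_pointwise atTop hzC
  have hεU : Tendsto (fun n => ε n * (2 * M)) U (𝓝 0) := by
    rw [← zero_mul (2 * M)]
    exact (hεlim.mul_const _).mono_left hU
  refine ⟨R', isNonexpansiveRetraction_of_tendsto hzne
    (fun x hx => .of_forall fun n => hzfix n x hx) (fun x hx => hFC hx.1) (fun x hx => ⟨?_, ?_⟩)
    hlim⟩
  · exact hF.mem_of_tendsto (hlim x hx) (.of_forall fun n => hzF n hx)
  · have hzR : Tendsto (fun n => z n x) U (𝓝[C] R' x) :=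
      tendsto_nhdsWithin_iff.2 ⟨hlim x hx, .of_forall fun n => hzC n hx⟩
    exact eq_of_tendsto_norm_sub ((hTc _ (hR'C hx)).tendsto.comp hzR) (hlim x hx)
      (squeeze_zero (fun _ => norm_nonneg _) (fun n => hzT n x hx) hεU)

theorem exists_isNonexpansiveRetraction_finset {ι : Type*} {C : Set (WeakDual ℝ E)}
    {T : ι → WeakDual ℝ E → WeakDual ℝ E} (hcomp : IsCompact C) (hconv : Convex ℝ C)
    (hTC : ∀ i, MapsTo (T i) C C) (hTc : ∀ i, ContinuousOn (T i) C)
    (hTne : ∀ i, NonexpansiveOn (T i) C) (hcomm : ∀ i j, ∀ x ∈ C, T i (T j x) = T j (T i x))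
    (t : Finset ι) :
    ∃ R, IsNonexpansiveRetraction R C {x | x ∈ C ∧ ∀ i ∈ t, T i x = x} := by
  classical
  induction t using Finset.induction_on with
  | empty => exact ⟨id, fun x hx => ⟨hx, by simp⟩, fun y _ z _ => le_rfl, fun x _ => rfl⟩
  | insert i t _ ih =>
    obtain ⟨R, hR⟩ := ih
    have hTF : MapsTo (T i) {x | x ∈ C ∧ ∀ j ∈ t, T j x = x}
        {x | x ∈ C ∧ ∀ j ∈ t, T j x = x} := fun x ⟨hx, hfix⟩ =>
      ⟨hTC i hx, fun j hj => by rw [← hcomm i j x hx, hfix j hj]⟩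
    obtain ⟨R', hR'⟩ := exists_isNonexpansiveRetraction_inter_fixedPoints hcomp hconv
      (isClosed_setOf_mem_and_forall_apply_eq hcomp.isClosed fun j _ => hTc j) (fun x hx => hx.1)
      hR (hTC i) hTF (hTc i) (hTne i)
    refine ⟨R', ?_⟩
    convert hR' using 1
    ext x
    simp only [mem_ofPred_eq, Finset.forall_mem_insert, Finset.mem_coe]
    tauto

end WeakDual

open WeakDual in
/-- An arbitrary commuting family `𝒮` of weak*-continuous
nonexpansive self-maps of a nonempty weak* compact convex set `C` has a nonempty
common fixed point set `Fix 𝒮` which is a nonexpansive retract of `C`. -/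
theorem stmt15 {E : Type*} [NormedAddCommGroup E] [NormedSpace ℝ E]
    (C : Set (WeakDual ℝ E)) (hne : C.Nonempty) (hcomp : IsCompact C) (hconv : Convex ℝ C)
    (S : Set (WeakDual ℝ E → WeakDual ℝ E))
    (hTmaps : ∀ T ∈ S, Set.MapsTo T C C)
    (hTc : ∀ T ∈ S, ContinuousOn T C)
    (hTne : ∀ T ∈ S, ∀ y ∈ C, ∀ z ∈ C,
      ‖WeakDual.toStrongDual (T y - T z)‖ ≤ ‖WeakDual.toStrongDual (y - z)‖)
    (hcomm : ∀ T ∈ S, ∀ T' ∈ S, ∀ x ∈ C, T (T' x) = T' (T x)) :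
    {x | x ∈ C ∧ ∀ T ∈ S, T x = x}.Nonempty ∧
    ∃ R : WeakDual ℝ E → WeakDual ℝ E,
      Set.MapsTo R C {x | x ∈ C ∧ ∀ T ∈ S, T x = x} ∧
      (∀ y ∈ C, ∀ z ∈ C,
        ‖WeakDual.toStrongDual (R y - R z)‖ ≤ ‖WeakDual.toStrongDual (y - z)‖) ∧
      (∀ x, (x ∈ C ∧ ∀ T ∈ S, T x = x) → R x = x) := by
  choose R hR using exists_isNonexpansiveRetraction_finset (T := fun T : S => T.1) hcomp hconv
    (fun T => hTmaps T T.2) (fun T => hTc T T.2) (fun T => hTne T T.2)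
    (fun T T' => hcomm T T.2 T' T'.2)
  obtain ⟨U, hU, R₀, hR₀C, hlim⟩ :=
    hcomp.exists_ultrafilter_tendsto_pointwise atTop fun t x hx => ((hR t).1 hx).1
  have hR₀ : MapsTo R₀ C {x | x ∈ C ∧ ∀ T ∈ S, T x = x} := by
    refine fun x hx => ⟨hR₀C hx, fun T hT => ?_⟩
    have hev : ∀ᶠ t in U, R t x ∈ {y | y ∈ C ∧ T y = y} :=
      ((eventually_ge_atTop {⟨T, hT⟩}).filter_mono hU).mono fun t ht =>
        ⟨((hR t).1 hx).1, ((hR t).1 hx).2 _ (Finset.singleton_subset_iff.1 ht)⟩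
    exact ((isClosed_setOf_mem_and_apply_eq hcomp.isClosed (hTc T hT)).mem_of_tendsto
      (hlim x hx) hev).2
  have hret : IsNonexpansiveRetraction R₀ C {x | x ∈ C ∧ ∀ T ∈ S, T x = x} :=
    isNonexpansiveRetraction_of_tendsto (fun t => (hR t).2.1)
      (fun x hx => .of_forall fun t => (hR t).2.2 x ⟨hx.1, fun T _ => hx.2 T T.2⟩)
      (fun x hx => hx.1) hR₀ hlim
  exact ⟨⟨R₀ hne.some, hR₀ hne.some_mem⟩, R₀, hret⟩
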